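/- arXiv:1502.03242 — 3 statements merged into one kernel-verified Lean document; each statement's English description precedes it below -/
import Mathlib

section
/- Let 𝕗 be a finite field, J a finite-dimensional nilpotent associative 𝕗-algebra, G = 1 + J the associated algebra group, and λ ∈ J* = Hom_𝕗(J, 𝕗). Let B_λ : J × J → 𝕗 be the bilinear form B_λ(u,v) = λ(uv − vu). Then the stabilizer of λ under the coadjoint action of G on J* equals 1 + rad B_λ, where rad B_λ = {u ∈ J : λ(uv − vu) = 0 for all v ∈ J}. -/
namespace GRJJ

open Pointwise

/-- A non-unital ring `J` is a nilpotent algebra if some iterated product set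
`J ⋯ J` is zero, i.e. all products of some fixed length vanish. -/
def IsNilpotentAlgebra (J : Type*) [NonUnitalRing J] : Prop :=
  ∃ k : ℕ, (fun S : Set J => (Set.univ : Set J) * S)^[k] Set.univ ⊆ {0}

/-- Lemma 2.2: for a finite-dimensional nilpotent algebra `J` over a
finite field `𝕗` and a linear functional `l ∈ J*`, the stabilizer of `l` under the
coadjoint action of the algebra group `G = 1 + J` (realized inside the unitization of
`J`) is exactly `1 + rad B_l`, where `B_l (u, v) = l (uv - vu)`. -/
theorem stabilizer_coadjoint_eq_one_add_rad
    (𝕗 : Type*) [Field 𝕗] [Finite 𝕗] (J : Type*) [NonUnitalRing J] [Module 𝕗 J]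
    [IsScalarTower 𝕗 J J] [SMulCommClass 𝕗 J J] [FiniteDimensional 𝕗 J]
    (hnil : IsNilpotentAlgebra J) (l : Module.Dual 𝕗 J) :
    {g : (Unitization 𝕗 J)ˣ | (g : Unitization 𝕗 J).fst = 1 ∧
        ∀ u : J, l ((((g⁻¹ : (Unitization 𝕗 J)ˣ) : Unitization 𝕗 J) *
          Unitization.inr u * (g : Unitization 𝕗 J)).snd) = l u} =
      {g : (Unitization 𝕗 J)ˣ | ∃ u : J, (∀ v : J, l (u * v - v * u) = 0) ∧
        (g : Unitization 𝕗 J) = 1 + Unitization.inr u} := by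
  ext g
  simp only [Set.mem_setOf_eq]
  constructor
  · rintro ⟨hf, hl⟩
    set u := (g : Unitization 𝕗 J).snd with hu
    refine ⟨u, ?_, ?_⟩
    · intro v
      have key := hl (((g : Unitization 𝕗 J) * Unitization.inr v).snd)
      have h1 : (Unitization.inr (((g : Unitization 𝕗 J) * Unitization.inr v).snd) :
          Unitization 𝕗 J) = (g : Unitization 𝕗 J) * Unitization.inr v := by
        ext
        · simp [Unitization.fst_mul]
        · simp
      rw [h1, ← mul_assoc, Units.inv_mul, one_mul] at key
      simp only [Unitization.snd_mul, Unitization.fst_inr, Unitization.snd_inr, hf,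
        one_smul, zero_smul, add_zero, zero_add, ← hu] at key
      have h3 : l (v + v * u) = l (v + u * v) := key
      simp only [map_add] at h3
      rw [map_sub, sub_eq_zero]
      exact (add_left_cancel h3).symm
    · refine Unitization.ext ?_ ?_
      · simp [hf]
      · simp [hu]
  · rintro ⟨u, hrad, hg⟩
    have hf : (g : Unitization 𝕗 J).fst = 1 := by rw [hg]; simp
    have hs : (g : Unitization 𝕗 J).snd = u := by rw [hg]; simp
    refine ⟨hf, fun v => ?_⟩
    have h1 : (Unitization.inr ((((g⁻¹ : (Unitization 𝕗 J)ˣ) : Unitization 𝕗 J) *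
        Unitization.inr v).snd) : Unitization 𝕗 J) =
        ((g⁻¹ : (Unitization 𝕗 J)ˣ) : Unitization 𝕗 J) * Unitization.inr v := by
      ext
      · simp [Unitization.fst_mul]
      · simp
    set w := ((((g⁻¹ : (Unitization 𝕗 J)ˣ) : Unitization 𝕗 J) * Unitization.inr v).snd)
    have h2 : (Unitization.inr v : Unitization 𝕗 J) =
        (g : Unitization 𝕗 J) * Unitization.inr w := by
      rw [h1, ← mul_assoc, Units.mul_inv, one_mul]
    rw [← h1]
    have hv : v = ((g : Unitization 𝕗 J) * Unitization.inr w).snd := by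
      rw [← h2]; simp
    conv_rhs => rw [hv]
    simp only [Unitization.snd_mul, Unitization.fst_inr, Unitization.snd_inr, hf, hs,
      one_smul, zero_smul, add_zero, zero_add]
    have := hrad w
    rw [map_sub, sub_eq_zero] at this
    simp only [map_add, this]
end GRJJ
end

section
/- Let 𝕗 be a finite field, J a finite-dimensional nilpotent associative 𝕗-algebra, and G = 1 + J the associated algebra group. Then the number of elements of J* = Hom_𝕗(J, 𝕗) fixed by the coadjoint action of G equals the index of the linear span [J,J]_L of Lie brackets in J, i.e. equals |J / [J,J]_L|. -/
namespace GRJJ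

open Pointwise

lemma inr_isNilpotent (𝕗 : Type*) [Field 𝕗] (J : Type*) [NonUnitalRing J] [Module 𝕗 J]
    [IsScalarTower 𝕗 J J] [SMulCommClass 𝕗 J J]
    (hnil : IsNilpotentAlgebra J) (v : J) :
    IsNilpotent (Unitization.inr v : Unitization 𝕗 J) := by
  obtain ⟨k, hk⟩ := hnil
  have key : ∀ n : ℕ, ∃ w ∈ (fun S : Set J => (Set.univ : Set J) * S)^[n] Set.univ,
      (Unitization.inr v : Unitization 𝕗 J) ^ (n + 1) = Unitization.inr w := by
    intro n
    induction n with
    | zero => exact ⟨v, Set.mem_univ v, pow_one _⟩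
    | succ m ih =>
      obtain ⟨w, hw, hpow⟩ := ih
      refine ⟨v * w, ?_, ?_⟩
      · rw [Function.iterate_succ']
        exact Set.mul_mem_mul (Set.mem_univ v) hw
      · rw [pow_succ', hpow, Unitization.inr_mul]
  obtain ⟨w, hw, hpow⟩ := key k
  have hw0 : w = 0 := hk hw
  exact ⟨k + 1, by rw [hpow, hw0, Unitization.inr_zero]⟩

/-- Lemma 2.3: for a finite-dimensional nilpotent algebra `J` over a
finite field `𝕗`, the number of fixed points of `J*` under the coadjoint action of the
algebra group `G = 1 + J` (realized inside the unitization of `J`) equals the index of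
the linear span `[J,J]_L` of Lie brackets in `J`. -/
theorem card_fixedPoints_coadjoint_eq_card_quotient_lieSpan
    (𝕗 : Type*) [Field 𝕗] [Finite 𝕗] (J : Type*) [NonUnitalRing J] [Module 𝕗 J]
    [IsScalarTower 𝕗 J J] [SMulCommClass 𝕗 J J] [FiniteDimensional 𝕗 J]
    (hnil : IsNilpotentAlgebra J) :
    Nat.card {l : Module.Dual 𝕗 J |
        ∀ g : (Unitization 𝕗 J)ˣ, (g : Unitization 𝕗 J).fst = 1 →
          ∀ u : J, l ((((g⁻¹ : (Unitization 𝕗 J)ˣ) : Unitization 𝕗 J) *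
            Unitization.inr u * (g : Unitization 𝕗 J)).snd) = l u} =
      Nat.card (J ⧸ Submodule.span 𝕗 {x : J | ∃ u v : J, x = u * v - v * u}) := by
  set M : Submodule 𝕗 J := Submodule.span 𝕗 {x : J | ∃ u v : J, x = u * v - v * u} with hM
  -- a general computation of the second component of `g⁻¹ * inr u * g`
  have snd_conj : ∀ g : (Unitization 𝕗 J)ˣ, (g : Unitization 𝕗 J).fst = 1 → ∀ u : J,
      (((g⁻¹ : (Unitization 𝕗 J)ˣ) : Unitization 𝕗 J) *
        Unitization.inr u * (g : Unitization 𝕗 J)).snd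
        = u + ((u + ((g⁻¹ : (Unitization 𝕗 J)ˣ) : Unitization 𝕗 J).snd * u) *
            (g : Unitization 𝕗 J).snd
          - (g : Unitization 𝕗 J).snd *
            (u + ((g⁻¹ : (Unitization 𝕗 J)ˣ) : Unitization 𝕗 J).snd * u)) := by
    intro g hg u
    set w : J := ((g⁻¹ : (Unitization 𝕗 J)ˣ) : Unitization 𝕗 J).snd with hwdef
    set v : J := (g : Unitization 𝕗 J).snd with hvdef
    have hginv : ((g⁻¹ : (Unitization 𝕗 J)ˣ) : Unitization 𝕗 J).fst = 1 := by
      have h1 : ((g : Unitization 𝕗 J) * ((g⁻¹ : (Unitization 𝕗 J)ˣ) :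
          Unitization 𝕗 J)).fst = (1 : Unitization 𝕗 J).fst := by
        rw [Units.mul_inv]
      rw [Unitization.fst_mul, hg, one_mul, Unitization.fst_one] at h1
      exact h1
    -- relation from g * g⁻¹ = 1 : w + v + v * w = 0
    have hrel : w + v + v * w = 0 := by
      have h1 : ((g : Unitization 𝕗 J) * ((g⁻¹ : (Unitization 𝕗 J)ˣ) :
          Unitization 𝕗 J)).snd = (1 : Unitization 𝕗 J).snd := by
        rw [Units.mul_inv]
      rw [Unitization.snd_mul, hg, hginv, Unitization.snd_one, one_smul, one_smul,
        ← hwdef, ← hvdef] at h1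
      calc w + v + v * w = v + (w + v * w) := by abel
        _ = 0 := by rw [← h1]; abel
    -- compute the product
    rw [Unitization.snd_mul, Unitization.snd_mul, Unitization.fst_mul, hg, hginv,
      Unitization.fst_inr, Unitization.snd_inr, mul_zero, zero_smul, one_smul, one_smul,
      zero_add, ← hwdef, ← hvdef]
    have h : w * u + v * u + v * (w * u) = 0 := by
      have h0 : (w + v + v * w) * u = 0 := by rw [hrel, zero_mul]
      rw [add_mul, add_mul, mul_assoc] at h0
      exact h0
    rw [mul_add]
    simp only [zero_smul, add_zero]
    calc u + w * u + (u + w * u) * v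
        = u + ((u + w * u) * v - (v * u + v * (w * u)))
            + (w * u + v * u + v * (w * u)) := by abel
      _ = u + ((u + w * u) * v - (v * u + v * (w * u))) := by rw [h, add_zero]
  -- the fixed-point set equals the dual annihilator of M
  have hset : {l : Module.Dual 𝕗 J |
        ∀ g : (Unitization 𝕗 J)ˣ, (g : Unitization 𝕗 J).fst = 1 →
          ∀ u : J, l ((((g⁻¹ : (Unitization 𝕗 J)ˣ) : Unitization 𝕗 J) *
            Unitization.inr u * (g : Unitization 𝕗 J)).snd) = l u}
      = (M.dualAnnihilator : Set (Module.Dual 𝕗 J)) := by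
    ext l
    simp only [Set.mem_setOf_eq, SetLike.mem_coe, Submodule.mem_dualAnnihilator]
    constructor
    · intro hl
      intro x hx
      have hgen : ∀ a v : J, l (a * v - v * a) = 0 := by
        intro a v
        have hu : IsUnit (1 + (Unitization.inr v : Unitization 𝕗 J)) :=
          (inr_isNilpotent 𝕗 J hnil v).isUnit_one_add
        set g : (Unitization 𝕗 J)ˣ := hu.unit with hgdef
        have hgcoe : (g : Unitization 𝕗 J) = 1 + Unitization.inr v := hu.unit_spec
        have hg1 : (g : Unitization 𝕗 J).fst = 1 := by
          rw [hgcoe, Unitization.fst_add, Unitization.fst_one, Unitization.fst_inr, add_zero]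
        have hgsnd : (g : Unitization 𝕗 J).snd = v := by
          rw [hgcoe, Unitization.snd_add, Unitization.snd_one, Unitization.snd_inr, zero_add]
        set w : J := ((g⁻¹ : (Unitization 𝕗 J)ˣ) : Unitization 𝕗 J).snd with hwdef
        have hginv : ((g⁻¹ : (Unitization 𝕗 J)ˣ) : Unitization 𝕗 J).fst = 1 := by
          have h1 : ((g : Unitization 𝕗 J) * ((g⁻¹ : (Unitization 𝕗 J)ˣ) :
              Unitization 𝕗 J)).fst = (1 : Unitization 𝕗 J).fst := by
            rw [Units.mul_inv]
          rw [Unitization.fst_mul, hg1, one_mul, Unitization.fst_one] at h1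
          exact h1
        -- relation from g⁻¹ * g = 1 : v + w + w * v = 0
        have hrel : v + w + w * v = 0 := by
          have h1 : (((g⁻¹ : (Unitization 𝕗 J)ˣ) : Unitization 𝕗 J) *
              (g : Unitization 𝕗 J)).snd = (1 : Unitization 𝕗 J).snd := by
            rw [Units.inv_mul]
          rw [Unitization.snd_mul, hg1, hginv, Unitization.snd_one, one_smul, one_smul,
            ← hwdef, hgsnd] at h1
          exact h1
        -- choose u so that u + w * u = a
        set u : J := a + v * a with hudef
        have hua : u + w * u = a := by
          have h0 : u + w * u = a + (v + w + w * v) * a := by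
            rw [hudef, add_mul, add_mul, mul_assoc, mul_add]
            abel
          rw [h0, hrel, zero_mul, add_zero]
        have := hl g hg1 u
        rw [snd_conj g hg1 u, ← hwdef, hgsnd, hua, map_add] at this
        -- this : l u + l (a * v - v * a) = l u
        linear_combination this
      -- now x ∈ span of generators
      have hle : M ≤ LinearMap.ker l := by
        rw [hM]
        apply Submodule.span_le.2
        rintro x ⟨a, v, rfl⟩
        exact hgen a v
      exact hle hx
    · intro hl g hg u
      rw [snd_conj g hg u, map_add]
      have : l ((u + ((g⁻¹ : (Unitization 𝕗 J)ˣ) : Unitization 𝕗 J).snd * u) *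
            (g : Unitization 𝕗 J).snd
          - (g : Unitization 𝕗 J).snd *
            (u + ((g⁻¹ : (Unitization 𝕗 J)ˣ) : Unitization 𝕗 J).snd * u)) = 0 := by
        apply hl
        apply Submodule.subset_span
        exact ⟨_, _, rfl⟩
      rw [this, add_zero]
  rw [hset]
  -- cardinality computation
  have e1 : Module.Dual 𝕗 (J ⧸ M) ≃ₗ[𝕗] M.dualAnnihilator :=
    M.dualQuotEquivDualAnnihilator
  have e2 : (J ⧸ M) ≃ₗ[𝕗] Module.Dual 𝕗 (J ⧸ M) :=
    (Module.finBasis 𝕗 (J ⧸ M)).toDualEquiv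
  calc Nat.card (M.dualAnnihilator : Set (Module.Dual 𝕗 J))
      = Nat.card M.dualAnnihilator := rfl
    _ = Nat.card (Module.Dual 𝕗 (J ⧸ M)) := (Nat.card_congr e1.toEquiv).symm
    _ = Nat.card (J ⧸ M) := (Nat.card_congr e2.toEquiv).symm

end GRJJ
end

section
/- Let p be a prime, q = p^n, and π a finite p-group. Then the exponent of the abelian group M_q defined from the Witt vectors of 𝔽_q as in the context divides the exponent of π; that is, p^e · M_q = 0 where p^e = exp(π). -/
/-!
Telescoping the relations `p • y ≡ Ψ y` gives `p ^ e • x ≡ Ψ^[e] x` in `M_q` for every `x` in the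
augmentation ideal. If `exp π = p ^ e`, every `g ^ p ^ e` is `1`, so `Ψ^[e] x = φ^[e] (aug x) • 1`,
which vanishes because `aug x = 0`.
-/

lemma Finsupp.mapDomain_const {α β M : Type*} [AddCommMonoid M] (b : β) (v : α →₀ M) :
    Finsupp.mapDomain (fun _ => b) v = Finsupp.single b (v.sum fun _ m => m) :=
  (map_finsuppSum (Finsupp.singleAddHom b) v fun _ m => m).symm

lemma AddSubgroup.pow_smul_sub_iterate_mem {G : Type*} [AddCommGroup G] (H : AddSubgroup G)
    {S : Set G} {f : G → G} (hf : Set.MapsTo f S S) {n : ℕ} (h : ∀ y ∈ S, n • y - f y ∈ H)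
    (k : ℕ) {x : G} (hx : x ∈ S) : n ^ k • x - f^[k] x ∈ H := by
  induction k with
  | zero => simp
  | succ k ih =>
    have hsplit : n ^ (k + 1) • x - f^[k + 1] x =
        n • (n ^ k • x - f^[k] x) + (n • f^[k] x - f (f^[k] x)) := by
      rw [Function.iterate_succ_apply', smul_sub, smul_smul, ← pow_succ']
      abel
    rw [hsplit]
    exact H.add_mem (H.nsmul_mem ih n) (h _ (hf.iterate k hx))

namespace GRJJ

variable (R : Type*) [CommRing R] (π : Type*) [Group π]

/-- The augmentation homomorphism of a group ring, sending every `g : π` to `1`. -/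
noncomputable def aug : MonoidAlgebra R π →ₐ[R] R :=
  MonoidAlgebra.lift R R π 1

/-- The augmentation ideal of a group ring. -/
noncomputable def augIdeal : Ideal (MonoidAlgebra R π) :=
  RingHom.ker (aug R π).toRingHom

/-- The group `1 + I` of normalized units of the group ring `R[π]`:
units `u` with `u - 1` in the augmentation ideal. -/
noncomputable def normalizedUnits : Subgroup (MonoidAlgebra R π)ˣ where
  carrier := {u | (u : MonoidAlgebra R π) - 1 ∈ augIdeal R π}
  one_mem' := by simp
  mul_mem' := by
    intro u v hu hv
    have h : ((u * v : (MonoidAlgebra R π)ˣ) : MonoidAlgebra R π) - 1 =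
        (u : MonoidAlgebra R π) * ((v : MonoidAlgebra R π) - 1) +
          ((u : MonoidAlgebra R π) - 1) := by
      push_cast
      noncomm_ring
    show ((u * v : (MonoidAlgebra R π)ˣ) : MonoidAlgebra R π) - 1 ∈ augIdeal R π
    rw [h]
    exact (augIdeal R π).add_mem ((augIdeal R π).mul_mem_left _ hv) hu
  inv_mem' := by
    intro u hu
    have h : ((u⁻¹ : (MonoidAlgebra R π)ˣ) : MonoidAlgebra R π) - 1 =
        ((u⁻¹ : (MonoidAlgebra R π)ˣ) : MonoidAlgebra R π) *
          (1 - (u : MonoidAlgebra R π)) := by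
      rw [mul_sub, mul_one, Units.inv_mul]
    show ((u⁻¹ : (MonoidAlgebra R π)ˣ) : MonoidAlgebra R π) - 1 ∈ augIdeal R π
    rw [h]
    refine (augIdeal R π).mul_mem_left _ ?_
    simpa using (augIdeal R π).neg_mem hu

variable (p : ℕ) [Fact p.Prime]

/-- The map `Ψ : R_q[π] → R_q[π]`, `Σ aₘ g ↦ Σ φ(aₘ) gᵖ`, where `φ` is the Frobenius
endomorphism of the Witt vectors `R_q = W(𝔽_q)`. -/
noncomputable def psi (K : Type*) [CommRing K] (π : Type*) [Group π]
    (x : MonoidAlgebra (WittVector p K) π) : MonoidAlgebra (WittVector p K) π :=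
  MonoidAlgebra.ofCoeff (Finsupp.mapDomain (fun g : π => g ^ p)
    (Finsupp.mapRange (⇑(WittVector.frobenius : WittVector p K →+* WittVector p K))
      (map_zero _) x.coeff))

/-- The subgroup of relations defining `M_q`: the additive subgroup of `R_q[π]` generated
by the elements `x - g⁻¹xg` and `p•x - Ψ(x)` for `x` in the augmentation ideal. -/
noncomputable def MqRel (K : Type*) [CommRing K] (π : Type*) [Group π] :
    AddSubgroup (MonoidAlgebra (WittVector p K) π) :=
  AddSubgroup.closure
    ({y | ∃ x ∈ augIdeal (WittVector p K) π, ∃ g : π,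
        y = x - MonoidAlgebra.of (WittVector p K) π g⁻¹ * x *
          MonoidAlgebra.of (WittVector p K) π g} ∪
      {y | ∃ x ∈ augIdeal (WittVector p K) π, y = p • x - psi p K π x})

/-- The abelian group `M_q`: the quotient of the augmentation ideal of `W(𝔽_q)[π]` by the
relations `x ≡ g⁻¹xg` and `p•x ≡ Ψ(x)`. -/
abbrev Mq (K : Type*) [CommRing K] (π : Type*) [Group π] :=
  ↥(augIdeal (WittVector p K) π).toAddSubgroup ⧸
    ((MqRel p K π).addSubgroupOf (augIdeal (WittVector p K) π).toAddSubgroup)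

section AugmentationIdeal

variable {R : Type*} [CommRing R] {π : Type*} [Group π]

lemma aug_apply (f : MonoidAlgebra R π) : aug R π f = f.coeff.sum fun _ a => a := by
  simp [aug, MonoidAlgebra.lift_apply]

lemma mem_augIdeal_iff {f : MonoidAlgebra R π} : f ∈ augIdeal R π ↔ aug R π f = 0 :=
  RingHom.mem_ker

end AugmentationIdeal

section Psi

variable {p : ℕ} [Fact p.Prime] {K : Type*} [CommRing K] {π : Type*} [Group π]

local notation "φ" => (WittVector.frobenius : WittVector p K →+* WittVector p K)

lemma psi_iterate (k : ℕ) (x : MonoidAlgebra (WittVector p K) π) :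
    (psi p K π)^[k] x = MonoidAlgebra.ofCoeff
      (Finsupp.mapDomain (· ^ p ^ k) (Finsupp.mapRange ⇑(φ ^ k) (map_zero _) x.coeff)) := by
  induction k with
  | zero =>
    exact MonoidAlgebra.ext (by simp [← Function.id_def])
  | succ k ih =>
    rw [Function.iterate_succ_apply', ih, psi, MonoidAlgebra.coeff_ofCoeff,
      ← Finsupp.mapDomain_mapRange _ _ _ _ (map_add _), ← Finsupp.mapDomain_comp]
    congr 2
    · ext g
      simp [← pow_mul, pow_succ]
    · ext
      simp [pow_succ']

lemma aug_psi (x : MonoidAlgebra (WittVector p K) π) :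
    aug _ π (psi p K π x) = φ (aug _ π x) := by
  rw [aug_apply, aug_apply, psi, MonoidAlgebra.coeff_ofCoeff,
    Finsupp.sum_mapDomain_index (by simp) (by simp), Finsupp.sum_mapRange_index (by simp),
    map_finsuppSum]

lemma psi_mapsTo_augIdeal :
    Set.MapsTo (psi p K π) (augIdeal (WittVector p K) π) (augIdeal (WittVector p K) π) :=
  fun x hx => by rw [SetLike.mem_coe, mem_augIdeal_iff, aug_psi, mem_augIdeal_iff.mp hx, map_zero]

lemma psi_iterate_eq_zero {e : ℕ} (h : ∀ g : π, g ^ p ^ e = 1)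
    {x : MonoidAlgebra (WittVector p K) π} (hx : x ∈ augIdeal (WittVector p K) π) :
    (psi p K π)^[e] x = 0 := by
  rw [psi_iterate, funext h, Finsupp.mapDomain_const, Finsupp.sum_mapRange_index (by simp),
    ← map_finsuppSum, ← aug_apply, mem_augIdeal_iff.mp hx, map_zero, Finsupp.single_zero,
    MonoidAlgebra.ofCoeff_zero]

lemma nsmul_sub_psi_mem_MqRel {x : MonoidAlgebra (WittVector p K) π}
    (hx : x ∈ augIdeal (WittVector p K) π) : p • x - psi p K π x ∈ MqRel p K π :=
  AddSubgroup.subset_closure (Or.inr ⟨x, hx, rfl⟩)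

lemma pow_smul_Mq_eq_zero {e : ℕ} (h : ∀ g : π, g ^ p ^ e = 1) (x : Mq p K π) :
    p ^ e • x = 0 := by
  induction x using QuotientAddGroup.induction_on with
  | H v =>
    rw [← QuotientAddGroup.mk_nsmul, QuotientAddGroup.eq_zero_iff, AddSubgroup.mem_addSubgroupOf,
      AddSubgroup.coe_nsmul]
    simpa [psi_iterate_eq_zero h v.2] using (MqRel p K π).pow_smul_sub_iterate_mem
      psi_mapsTo_augIdeal (fun _ => nsmul_sub_psi_mem_MqRel) e v.2

end Psi

theorem exponent_smul_Mq_general (p : ℕ) [Fact p.Prime]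
    (K : Type*) [Field K]
    (π : Type*) [Group π] [Finite π] (hπ : IsPGroup p π) :
    ∀ x : Mq p K π, Monoid.exponent π • x = 0 := by
  obtain ⟨e, he⟩ := hπ.exists_exponent_eq_pow
  rw [he]
  exact pow_smul_Mq_eq_zero fun g => he ▸ Monoid.pow_exponent_eq_one g

/-- part of the proof of Theorem 1.3: for a finite `p`-group `π` and
`K = 𝔽_q` with `q = pⁿ` elements, the exponent of `M_q` divides the exponent of `π`:
`exp(π) • M_q = 0`. -/
theorem exponent_smul_Mq (p n : ℕ) [Fact p.Prime] (hn : 0 < n)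
    (K : Type*) [Field K] [Fintype K] (hK : Fintype.card K = p ^ n)
    (π : Type*) [Group π] [Finite π] (hπ : IsPGroup p π) :
    ∀ x : Mq p K π, Monoid.exponent π • x = 0 :=
  exponent_smul_Mq_general p K π hπ

end GRJJ
end
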